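/- Let $1 < p \le 2$ and $\mu \ge 0$. There exists a constant $C > 0$, independent of $\mu$, such that for all matrices $A, B \in \mathbb{R}^{N \times n}$, $\left| (\mu + |A|)^{p-2} A - (\mu + |B|)^{p-2} B \right| \le C \, \frac{|A - B|}{(\mu + |A| + |B|)^{2-p}}$, where $|\cdot|$ denotes the Frobenius (Euclidean) norm and the left side is interpreted as $0$ when $\mu = 0$ and the corresponding matrix vanishes. -/

import Mathlib

/-!
Put `a = μ + ‖A‖ ≥ b = μ + ‖B‖` and `t = 2 - p ∈ [0, 1]`. Splitting
`a⁻ᵗ A - b⁻ᵗ B = a⁻ᵗ (A - B) + (a⁻ᵗ - b⁻ᵗ) B`, the second term is controlled, using that `x ↦ x¹⁻ᵗ` is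
increasing, by `(b⁻ᵗ - a⁻ᵗ) ‖B‖ ≤ (b⁻ᵗ - a⁻ᵗ) b = b¹⁻ᵗ - a⁻ᵗ b ≤ a¹⁻ᵗ - a⁻ᵗ b = a⁻ᵗ (a - b)`, and
`a - b ≤ ‖A - B‖`. This gives the bound `2 a⁻ᵗ ‖A - B‖`, and `μ + ‖A‖ + ‖B‖ ≤ 2a` turns `a⁻ᵗ` into
at most `2 (μ + ‖A‖ + ‖B‖)⁻ᵗ`.
-/

open Real

lemma sub_rpow_neg_mul_le {a b x t : ℝ} (ht0 : 0 ≤ t) (ht1 : t ≤ 1) (ha : 0 < a)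
    (hx : 0 ≤ x) (hxb : x ≤ b) (hba : b ≤ a) :
    (b ^ (-t) - a ^ (-t)) * x ≤ a ^ (-t) * (a - b) := by
  rcases hx.eq_or_lt with rfl | hx
  · rw [mul_zero]
    exact mul_nonneg (rpow_nonneg ha.le _) (sub_nonneg.2 hba)
  have hb : 0 < b := hx.trans_le hxb
  have hanti : a ^ (-t) ≤ b ^ (-t) := rpow_le_rpow_of_nonpos hb hba (neg_nonpos.2 ht0)
  have hmono : b ^ (-t + 1) ≤ a ^ (-t + 1) := rpow_le_rpow hb.le hba (by linarith)
  rw [rpow_add_one hb.ne', rpow_add_one ha.ne'] at hmono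
  calc (b ^ (-t) - a ^ (-t)) * x ≤ (b ^ (-t) - a ^ (-t)) * b :=
        mul_le_mul_of_nonneg_left hxb (sub_nonneg.2 hanti)
    _ ≤ a ^ (-t) * (a - b) := by linarith

lemma rpow_le_two_mul_rpow {s a t : ℝ} (ht0 : 0 ≤ t) (ht1 : t ≤ 1) (hs : 0 ≤ s)
    (hsa : s ≤ 2 * a) : s ^ t ≤ 2 * a ^ t := by
  calc s ^ t ≤ (2 * a) ^ t := rpow_le_rpow hs hsa ht0
    _ = 2 ^ t * a ^ t := mul_rpow zero_le_two (by linarith)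
    _ ≤ 2 * a ^ t := by
      gcongr
      · exact rpow_nonneg (by linarith) _
      · exact rpow_le_self_of_one_le one_le_two ht1

section NormedSpace

variable {E : Type*} [NormedAddCommGroup E] [NormedSpace ℝ E] {μ t : ℝ}

lemma norm_rpow_smul_sub_rpow_smul_le_of_norm_le (hμ : 0 ≤ μ) (ht0 : 0 ≤ t) (ht1 : t ≤ 1)
    {A B : E} (hBA : ‖B‖ ≤ ‖A‖) (ha : 0 < μ + ‖A‖) :
    ‖(μ + ‖A‖) ^ (-t) • A - (μ + ‖B‖) ^ (-t) • B‖ ≤ 2 * (μ + ‖A‖) ^ (-t) * ‖A - B‖ := by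
  rcases eq_or_ne B 0 with rfl | hB
  · rw [smul_zero, sub_zero, sub_zero, norm_smul, Real.norm_of_nonneg (rpow_nonneg ha.le _)]
    linarith [mul_nonneg (rpow_nonneg ha.le (-t)) (norm_nonneg A)]
  set a := μ + ‖A‖
  set b := μ + ‖B‖
  have hb : 0 < b := by positivity
  have hanti : a ^ (-t) ≤ b ^ (-t) := rpow_le_rpow_of_nonpos hb (by linarith) (neg_nonpos.2 ht0)
  have hscalar : (b ^ (-t) - a ^ (-t)) * ‖B‖ ≤ a ^ (-t) * ‖A - B‖ := by
    refine (sub_rpow_neg_mul_le ht0 ht1 ha (norm_nonneg B) (by linarith) (by linarith)).trans ?_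
    gcongr
    linarith [norm_sub_norm_le A B]
  calc ‖a ^ (-t) • A - b ^ (-t) • B‖ = ‖a ^ (-t) • (A - B) - (b ^ (-t) - a ^ (-t)) • B‖ := by
        congr 1; module
    _ ≤ a ^ (-t) * ‖A - B‖ + (b ^ (-t) - a ^ (-t)) * ‖B‖ := by
        refine (norm_sub_le _ _).trans_eq ?_
        rw [norm_smul, norm_smul, Real.norm_of_nonneg (rpow_nonneg ha.le _),
          Real.norm_of_nonneg (sub_nonneg.2 hanti)]
    _ ≤ 2 * a ^ (-t) * ‖A - B‖ := by linarith

lemma norm_rpow_smul_sub_rpow_smul_le (hμ : 0 ≤ μ) (ht0 : 0 ≤ t) (ht1 : t ≤ 1) (A B : E) :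
    ‖(μ + ‖A‖) ^ (-t) • A - (μ + ‖B‖) ^ (-t) • B‖ ≤ 4 * ‖A - B‖ / (μ + ‖A‖ + ‖B‖) ^ t := by
  wlog hBA : ‖B‖ ≤ ‖A‖ generalizing A B
  · have := this B A (le_of_not_ge hBA)
    rwa [norm_sub_rev, norm_sub_rev B, add_right_comm] at this
  rcases (show 0 ≤ μ + ‖A‖ by positivity).eq_or_lt with ha | ha
  · obtain rfl : A = 0 := norm_eq_zero.1 (by linarith [norm_nonneg A])
    obtain rfl : B = 0 := norm_le_zero_iff.1 (by simpa using hBA)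
    simp
  have hs : 0 < (μ + ‖A‖ + ‖B‖) ^ t := rpow_pos_of_pos (by positivity) t
  have hsa : (μ + ‖A‖ + ‖B‖) ^ t ≤ 2 * (μ + ‖A‖) ^ t :=
    rpow_le_two_mul_rpow ht0 ht1 (by positivity) (by linarith)
  calc _ ≤ 2 * (μ + ‖A‖) ^ (-t) * ‖A - B‖ :=
        norm_rpow_smul_sub_rpow_smul_le_of_norm_le hμ ht0 ht1 hBA ha
    _ = 2 * ‖A - B‖ / (μ + ‖A‖) ^ t := by rw [rpow_neg ha.le]; ring
    _ ≤ 4 * ‖A - B‖ / (μ + ‖A‖ + ‖B‖) ^ t := by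
        rw [div_le_div_iff₀ (rpow_pos_of_pos ha t) hs]
        nlinarith [norm_nonneg (A - B)]

end NormedSpace

/-- Continuity estimate for the p-Laplacian stress tensor
`S(A) = (μ + |A|)^(p-2) A` on `N × n` matrices (Frobenius norm), with a constant
independent of `μ ≥ 0`. -/
theorem stmt_10 (N n : ℕ) (p : ℝ) (hp1 : 1 < p) (hp2 : p ≤ 2) :
    ∃ C : ℝ, 0 < C ∧ ∀ μ : ℝ, 0 ≤ μ → ∀ A B : EuclideanSpace ℝ (Fin N × Fin n),
      ‖(μ + ‖A‖) ^ (p - 2) • A - (μ + ‖B‖) ^ (p - 2) • B‖ ≤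
        C * ‖A - B‖ / (μ + ‖A‖ + ‖B‖) ^ (2 - p) := by
  refine ⟨4, by norm_num, fun μ hμ A B => ?_⟩
  rw [show p - 2 = -(2 - p) by ring]
  exact norm_rpow_smul_sub_rpow_smul_le hμ (by linarith) (by linarith) A B
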